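/- arXiv:2412.09339 — 2 statements merged into one kernel-verified Lean document; each statement's English description precedes it below -/
import Mathlib

section
/- An n×n real symmetric matrix A satisfies tr(A^{2k+1}) = 0 for all 0 ≤ k ≤ ⌊(n-1)/2⌋ if and only if its nonzero eigenvalues occur in oppositely signed pairs (with multiplicity). -/
/-!
Since `tr (A ^ m) = ∑ λᵢ ^ m`, the hypothesis says that the odd power sums `p₁, p₃, …` of the
eigenvalues vanish up to degree `n`. Newton's identities `m eₘ = ± ∑ ± eₐ p_b` (over `a + b = m`,
`a < m`) then force the odd elementary symmetric functions to vanish, so the characteristic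
polynomial `∏ (X - λᵢ)` equals `∏ (X + λᵢ)` and the spectrum is invariant under negation; zero
eigenvalues play no role. Conversely, odd powers of opposite eigenvalues cancel.
-/

/-- The multiset of eigenvalues (with multiplicity) of a real symmetric
(Hermitian) matrix. -/
noncomputable def eigMultiset {n : ℕ} {A : Matrix (Fin n) (Fin n) ℝ}
    (hA : A.IsHermitian) : Multiset ℝ :=
  Finset.univ.val.map hA.eigenvalues

/-- The nonzero eigenvalues of `A` occur in oppositely signed pairs (with
multiplicity): the multiset of nonzero eigenvalues is invariant under negation. -/
noncomputable def IsAustereSpectrum {n : ℕ} {A : Matrix (Fin n) (Fin n) ℝ}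
    (hA : A.IsHermitian) : Prop :=
  ((eigMultiset hA).filter (· ≠ 0)).map (fun t => -t)
    = (eigMultiset hA).filter (· ≠ 0)

open Finset Polynomial

theorem Matrix.IsHermitian.trace_pow_eq_sum_eigenvalues_pow {ι 𝕜 : Type*} [Fintype ι]
    [DecidableEq ι] [RCLike 𝕜] {A : Matrix ι ι 𝕜} (hA : A.IsHermitian) (m : ℕ) :
    (A ^ m).trace = ∑ i, (hA.eigenvalues i : 𝕜) ^ m := by
  conv_lhs => rw [hA.spectral_theorem]
  rw [← map_pow, Unitary.conjStarAlgAut_apply, Matrix.trace_mul_cycle,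
    Unitary.coe_star_mul_self, one_mul, Matrix.diagonal_pow, Matrix.trace_diagonal]
  rfl

namespace Multiset

theorem map_neg_filter_ne_zero_eq_iff {G : Type*} [SubtractionMonoid G] [DecidableEq G]
    (s : Multiset G) :
    (s.filter (· ≠ 0)).map Neg.neg = s.filter (· ≠ 0) ↔ s.map Neg.neg = s := by
  have hfilter : (s.map Neg.neg).filter (· ≠ 0) = (s.filter (· ≠ 0)).map Neg.neg := by
    rw [filter_map]
    exact congrArg _ (filter_congr fun x _ => neg_ne_zero)
  have hzero : (s.filter fun x => ¬x ≠ 0).map Neg.neg = s.filter fun x => ¬x ≠ 0 :=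
    (map_congr rfl fun x hx => by simp [not_not.mp (mem_filter.mp hx).2]).trans (map_id _)
  constructor
  · intro h
    conv_lhs => rw [← filter_add_not (· ≠ 0) s]
    rw [map_add, h, hzero, filter_add_not]
  · intro h
    rw [← hfilter, h]

theorem sum_map_pow_eq_zero_of_map_neg_eq_self {R : Type*} [Ring R] [IsAddTorsionFree R]
    {s : Multiset R} (hs : s.map Neg.neg = s) {m : ℕ} (hm : Odd m) :
    (s.map (· ^ m)).sum = 0 := by
  refine self_eq_neg.mp ?_
  conv_lhs => rw [← hs]
  rw [map_map, ← sum_map_neg]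
  congr 1
  exact map_congr rfl fun x _ => hm.neg_pow x

theorem map_neg_eq_self_of_esymm_odd_eq_zero {R : Type*} [CommRing R] [IsDomain R]
    {s : Multiset R} (hs : ∀ m, Odd m → m ≤ card s → s.esymm m = 0) :
    s.map Neg.neg = s := by
  have hprod : ((s.map Neg.neg).map fun t => X - C t).prod = (s.map fun t => X - C t).prod := by
    rw [prod_X_sub_X_eq_sum_esymm, prod_X_sub_X_eq_sum_esymm, card_map]
    refine sum_congr rfl fun j hj => ?_
    rw [esymm_neg]
    rcases Nat.even_or_odd j with hj_even | hj_odd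
    · simp [hj_even.neg_one_pow]
    · rw [hs j hj_odd (Nat.lt_succ_iff.mp (mem_range.mp hj))]
      simp
  simpa only [roots_multiset_prod_X_sub_C] using congrArg roots hprod

end Multiset

theorem esymm_odd_eq_zero_of_sum_pow_odd_eq_zero {σ R : Type*} [Fintype σ] [CommRing R]
    [NoZeroDivisors R] [CharZero R] {f : σ → R}
    (hf : ∀ m, Odd m → m ≤ Fintype.card σ → ∑ i, f i ^ m = 0) :
    ∀ m, Odd m → m ≤ Fintype.card σ → (univ.val.map f).esymm m = 0 := by
  intro m
  induction m using Nat.strong_induction_on with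
  | _ m ih =>
    intro hm hmσ
    have newton := congrArg (MvPolynomial.aeval f) (MvPolynomial.mul_esymm_eq_sum σ R m)
    simp only [map_mul, map_sum, map_pow, map_neg, map_one, map_natCast,
      MvPolynomial.aeval_esymm_eq_multiset_esymm, MvPolynomial.psum, MvPolynomial.aeval_X] at newton
    rw [sum_eq_zero, mul_zero] at newton
    · exact (mul_eq_zero.mp newton).resolve_left (Nat.cast_ne_zero.mpr hm.pos.ne')
    intro a ha
    rw [mem_filter, HasAntidiagonal.mem_antidiagonal] at ha
    -- `a.1 + a.2 = m` is odd: either the power sum `a.2` vanishes, or `a.1 < m` is odd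
    rcases Nat.even_or_odd a.2 with h2 | h2
    · have h1 : Odd a.1 := by
        rcases hm with ⟨c, hc⟩; rcases h2 with ⟨d, hd⟩; exact ⟨c - d, by omega⟩
      rw [ih a.1 ha.2 h1 (by omega), mul_zero, zero_mul]
    · rw [hf a.2 h2 (by omega), mul_zero]

theorem austere_iff_trace_odd_pow {n : ℕ} (A : Matrix (Fin n) (Fin n) ℝ)
    (hA : A.IsHermitian) :
    (∀ k : ℕ, k ≤ (n - 1) / 2 → (A ^ (2 * k + 1)).trace = 0)
      ↔ IsAustereSpectrum hA := by
  simp only [IsAustereSpectrum, eigMultiset, hA.trace_pow_eq_sum_eigenvalues_pow,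
    RCLike.ofReal_real_eq_id, id]
  rw [Multiset.map_neg_filter_ne_zero_eq_iff]
  have hcard : Multiset.card (univ.val.map hA.eigenvalues) = Fintype.card (Fin n) := by simp
  constructor
  · intro h
    refine Multiset.map_neg_eq_self_of_esymm_odd_eq_zero fun m hm hmn => ?_
    refine esymm_odd_eq_zero_of_sum_pow_odd_eq_zero (fun j hj hjn => ?_) m hm (hcard ▸ hmn)
    obtain ⟨k, rfl⟩ := hj
    exact h k (by rw [Fintype.card_fin] at hjn; omega)
  · intro h k _
    have hsum := Multiset.sum_map_pow_eq_zero_of_map_neg_eq_self h (odd_two_mul_add_one k)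
    rwa [Multiset.map_map, sum_map_val] at hsum
end

section
/- Every 2m×2m real matrix of the block form [[a₁, a₂], [a₂, -a₁]], where a₁ and a₂ are m×m real symmetric matrices, is a symmetric austere matrix, i.e., all traces of its odd powers vanish. -/
open Matrix

theorem blockform_Qn_austere {m : ℕ} (a₁ a₂ : Matrix (Fin m) (Fin m) ℝ)
    (h₁ : a₁.IsSymm) (h₂ : a₂.IsSymm) :
    (fromBlocks a₁ a₂ a₂ (-a₁)).IsSymm ∧
    ∀ k : ℕ, ((fromBlocks a₁ a₂ a₂ (-a₁)) ^ (2 * k + 1)).trace = 0 := by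
  set A : Matrix (Fin m ⊕ Fin m) (Fin m ⊕ Fin m) ℝ := fromBlocks a₁ a₂ a₂ (-a₁) with hA
  constructor
  · unfold Matrix.IsSymm
    rw [hA, Matrix.fromBlocks_transpose, h₁, h₂, transpose_neg, h₁]
  · set J : Matrix (Fin m ⊕ Fin m) (Fin m ⊕ Fin m) ℝ := fromBlocks 0 1 (-1) 0 with hJ
    have hJJ : J * J = -1 := by
      rw [hJ, fromBlocks_multiply]
      simp [← fromBlocks_one, fromBlocks_neg]
    have hJA : J * A = -(A * J) := by
      rw [hJ, hA, fromBlocks_multiply, fromBlocks_multiply]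
      simp [fromBlocks_neg]
    have key : ∀ n : ℕ, J * A ^ n = (-1 : ℝ) ^ n • (A ^ n * J) := by
      intro n
      induction n with
      | zero => simp
      | succ n ih =>
        rw [pow_succ, ← mul_assoc, ih, smul_mul_assoc, mul_assoc, hJA,
          pow_succ (-1 : ℝ)]
        rw [mul_neg, smul_neg, mul_assoc]
        module
    intro k
    have h1 : (A ^ (2 * k + 1)).trace = -(A ^ (2 * k + 1)).trace := by
      have e1 : A ^ (2 * k + 1) * (J * J) = -(A ^ (2 * k + 1)) := by
        rw [hJJ]; simp
      have e2 : (A ^ (2 * k + 1) * J * J).trace = (J * A ^ (2 * k + 1) * J).trace := by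
        rw [trace_mul_comm (A ^ (2 * k + 1) * J) J, mul_assoc]
      rw [key] at e2
      have e3 : ((-1 : ℝ) ^ (2 * k + 1)) = -1 := by
        rw [pow_succ, pow_mul]; norm_num
      rw [e3, neg_one_smul, neg_mul, trace_neg, mul_assoc, e1, trace_neg] at e2
      linarith [e2]
    linarith [h1]
end
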